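/- arXiv:math/0402340 — 2 statements merged into one kernel-verified Lean document; each statement's English description precedes it below -/
import Mathlib

section
/- Let V be a finite-dimensional vector space over an algebraically closed field k of characteristic p > 0, and F : V → V a p-linear map (F(λv) = λ^p F(v)). Let V^F = {v ∈ V : F(v) = v} be the set of fixed vectors and V^s = ∩_{i>0} im(F^i). Then V^F is an F_p-vector space and dim_k V^s = dim_{F_p} V^F. -/
/-!
Every fixed vector lies in the stable image `V^s`, `F` maps `V^s` onto itself, and a surjective
semilinear endomorphism of a finite-dimensional space is injective. So it suffices to show
`|U^F| = p ^ dim U` for a bijective `p`-linear `F` on `U`, by induction on `dim U`.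

A nonzero fixed vector exists: for `v ≠ 0` take the first linear relation
`F^(n+1) v = ∑ a_i F^i v` among the iterates (injectivity forces `a_0 ≠ 0`). The coefficients of a
fixed vector `∑ x_i F^i v` are then polynomials in `t = x_n`, subject to the single equation
`P(t) = t`, where `P' = 0` and `deg P = p^(n+1)`; so `X - P` is separable and has a nonzero root.
For a fixed `u ≠ 0`, reduction modulo `k u` maps `U^F` onto the fixed points of the induced map on
`U / k u`, because `t^p - t = c` is always solvable, and its kernel `{s u : s^p = s}` has `p`
elements.
-/

open Polynomial Finset

section StableImage

variable {R M : Type*} [Ring R] [AddCommGroup M] [Module R M] {σ : R →+* R} [RingHomSurjective σ]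
  (f : M →ₛₗ[σ] M)

def stableImage : Submodule R M := ⨅ i, (Submodule.map f)^[i] ⊤

theorem mem_iterate_map_top {i : ℕ} {v : M} :
    v ∈ (Submodule.map f)^[i] ⊤ ↔ ∃ u, f^[i] u = v := by
  induction i generalizing v with
  | zero => simp
  | succ i ih =>
    simp only [Function.iterate_succ_apply', Submodule.mem_map, ih]
    constructor
    · rintro ⟨_, ⟨u, rfl⟩, rfl⟩
      exact ⟨u, rfl⟩
    · rintro ⟨u, rfl⟩
      exact ⟨_, ⟨u, rfl⟩, rfl⟩

theorem mem_stableImage {v : M} : v ∈ stableImage f ↔ ∀ i, ∃ u, f^[i] u = v := by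
  simp only [stableImage, Submodule.mem_iInf, mem_iterate_map_top]

theorem mem_stableImage_of_apply_eq_self {v : M} (hv : f v = v) : v ∈ stableImage f :=
  (mem_stableImage f).mpr fun i => ⟨v, Function.iterate_fixed hv i⟩

theorem antitone_iterate_map_top : Antitone fun i => (Submodule.map f)^[i] ⊤ :=
  antitone_nat_of_succ_le fun i => by
    rw [Function.iterate_succ_apply]
    exact Monotone.iterate (fun _ _ h => Submodule.map_mono h) _ le_top

theorem map_stableImage [IsArtinian R M] : (stableImage f).map f = stableImage f := by
  obtain ⟨N, hN⟩ := IsArtinian.monotone_stabilizes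
    ⟨fun i => OrderDual.toDual ((Submodule.map f)^[i] ⊤), antitone_iterate_map_top f⟩
  replace hN : ∀ i, N ≤ i → (Submodule.map f)^[i] ⊤ = (Submodule.map f)^[N] ⊤ :=
    fun i hi => (hN i hi).symm
  have hstable : stableImage f = (Submodule.map f)^[N] ⊤ := by
    refine le_antisymm (iInf_le _ N) (le_iInf fun i => ?_)
    rcases le_total i N with hi | hi
    · exact antitone_iterate_map_top f hi
    · exact (hN i hi).ge
  rw [hstable, ← Function.iterate_succ_apply' (Submodule.map f)]
  exact hN _ N.le_succ

end StableImage

theorem LinearMap.injective_of_surjective_of_finiteDimensional {K V : Type*} [DivisionRing K]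
    [AddCommGroup V] [Module K V] [FiniteDimensional K V] {σ : K →+* K} [RingHomSurjective σ]
    (f : V →ₛₗ[σ] V) (hf : Function.Surjective f) : Function.Injective f := by
  let b := Module.finBasis K V
  have hspan : ⊤ ≤ Submodule.span K (Set.range (f ∘ b)) := by
    rw [Set.range_comp, ← Submodule.map_span, b.span_eq, Submodule.map_top,
      LinearMap.range_eq_top.mpr hf]
  have hli := linearIndependent_of_top_le_span_of_card_eq_finrank hspan (by simp)
  refine (injective_iff_map_eq_zero f).mpr fun x hx => ?_
  rw [← b.sum_repr x, map_sum] at hx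
  simp only [LinearMap.map_smulₛₗ] at hx
  have hc := Fintype.linearIndependent_iff.mp hli _ hx
  rw [← b.sum_repr x]
  simp [(map_eq_zero_iff σ σ.injective).mp (hc _)]

theorem linearIndepOn_range_of_notMem_span {K V : Type*} [DivisionRing K] [AddCommGroup V]
    [Module K V] {w : ℕ → V} {m : ℕ} (h : ∀ j < m, w j ∉ Submodule.span K (w '' range j)) :
    LinearIndepOn K w (range m) := by
  induction m with
  | zero => simp
  | succ n ih =>
    rw [range_add_one, coe_insert, linearIndepOn_insert (by simp)]
    exact ⟨ih fun j hj => h j (by omega), h n (by omega)⟩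

section FixedPoints

variable {R M : Type*} [Ring R] [AddCommGroup M] [Module R M] {σ : R →+* R}

def fixedAddSubgroup (f : M →ₛₗ[σ] M) : AddSubgroup M :=
  f.toAddMonoidHom.eqLocus (AddMonoidHom.id M)

@[simp] theorem mem_fixedAddSubgroup (f : M →ₛₗ[σ] M) {x : M} :
    x ∈ fixedAddSubgroup f ↔ f x = x :=
  Iff.rfl

theorem card_fixedAddSubgroup_restrict (f : M →ₛₗ[σ] M) {W : Submodule R M}
    (hW : ∀ x ∈ W, f x ∈ W) (hfix : ∀ x, f x = x → x ∈ W) :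
    Nat.card (fixedAddSubgroup (f.restrict hW)) = Nat.card (fixedAddSubgroup f) :=
  Nat.card_congr
    { toFun := fun x => ⟨x.1.1, congrArg Subtype.val x.2⟩
      invFun := fun x => ⟨⟨x.1, hfix _ x.2⟩, Subtype.ext x.2⟩
      left_inv := fun _ => rfl
      right_inv := fun _ => rfl }

end FixedPoints

section FixedMkQ

variable {R M : Type*} [Ring R] [AddCommGroup M] [Module R M] {σ : R →+* R}
  (f : M →ₛₗ[σ] M) (S : Submodule R M) (hS : S ≤ S.comap f)

def fixedMkQ : fixedAddSubgroup f →+ fixedAddSubgroup (S.mapQ S f hS) :=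
  (S.mkQ.toAddMonoidHom.comp (fixedAddSubgroup f).subtype).codRestrict _ fun x => by
    simp [(mem_fixedAddSubgroup f).mp x.2]

@[simp] theorem coe_fixedMkQ_apply (x : fixedAddSubgroup f) :
    (fixedMkQ f S hS x : M ⧸ S) = Submodule.Quotient.mk (x : M) :=
  rfl

theorem mem_ker_fixedMkQ {x : fixedAddSubgroup f} :
    x ∈ (fixedMkQ f S hS).ker ↔ (x : M) ∈ S := by
  rw [AddMonoidHom.mem_ker, ← Subtype.coe_inj, coe_fixedMkQ_apply, AddSubgroup.coe_zero,
    Submodule.Quotient.mk_eq_zero]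

end FixedMkQ

section Polynomials

variable {k : Type*} [Field k] {p : ℕ}

theorem card_pow_eq_self [IsAlgClosed k] [Fact p.Prime] [CharP k p] :
    Nat.card {s : k // s ^ p = s} = p := by
  have hp : 1 < p := (Fact.out : p.Prime).one_lt
  calc Nat.card {s : k // s ^ p = s} = Nat.card ((X ^ p - X : k[X]).rootSet k) :=
        Nat.card_congr <| Equiv.subtypeEquivRight fun s => by
          simp [mem_rootSet, FiniteField.X_pow_card_sub_X_ne_zero k hp, sub_eq_zero]
    _ = p := by
      rw [Nat.card_eq_fintype_card, card_rootSet_eq_natDegree (galois_poly_separable p p dvd_rfl)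
        (IsAlgClosed.splits _), FiniteField.X_pow_card_sub_X_natDegree_eq k hp]

theorem exists_pow_sub_self_eq [IsAlgClosed k] (hp : 1 < p) (c : k) : ∃ t : k, t ^ p - t = c := by
  have hdeg : (X ^ p - (X + C c) : k[X]).degree = p := by
    rw [degree_sub_eq_left_of_degree_lt] <;> rw [degree_X_pow]
    rw [degree_X_add_C]
    exact_mod_cast hp
  obtain ⟨t, ht⟩ := IsAlgClosed.exists_root _ (by rw [hdeg]; exact_mod_cast (by omega : p ≠ 0))
  exact ⟨t, sub_eq_iff_eq_add'.mpr (by simpa [sub_eq_zero] using ht)⟩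

theorem exists_ne_zero_eval_eq_self [IsAlgClosed k] {P : k[X]} (hP : derivative P = 0)
    (hdeg : 1 < P.natDegree) : ∃ t ≠ 0, P.eval t = t := by
  classical
  have hQdeg : (X - P).natDegree = P.natDegree :=
    natDegree_sub_eq_right_of_natDegree_lt (by rwa [natDegree_X])
  have hQ : X - P ≠ 0 := ne_zero_of_natDegree_gt (hQdeg ▸ hdeg)
  have hsep : (X - P).Separable := by
    rw [separable_def, derivative_sub, derivative_X, hP, sub_zero]
    exact isCoprime_one_right
  have hcard : 1 < (X - P).roots.toFinset.card := by
    rwa [Multiset.toFinset_card_of_nodup (nodup_roots hsep),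
      ← (IsAlgClosed.splits _).natDegree_eq_card_roots, hQdeg]
  obtain ⟨t, ht, ht0⟩ := Finset.exists_mem_ne hcard 0
  refine ⟨t, ht0, ?_⟩
  rw [Multiset.mem_toFinset, mem_roots hQ, IsRoot, eval_sub, eval_X, sub_eq_zero] at ht
  exact ht.symm

variable (p) in
/-- If `F^(n+1) v = ∑ a_i F^i v` with `F^0 v, …, F^n v` independent, then `∑ x_i F^i v` is fixed
by `F` exactly when `x_i = (frobeniusChain p a (i + 1)).eval x_n` for all `i ≤ n`. -/
noncomputable def frobeniusChain (a : ℕ → k) : ℕ → k[X]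
  | 0 => 0
  | i + 1 => frobeniusChain a i ^ p + C (a i) * X ^ p

theorem derivative_frobeniusChain [CharP k p] (a : ℕ → k) (i : ℕ) :
    derivative (frobeniusChain p a i) = 0 := by
  induction i with
  | zero => simp [frobeniusChain]
  | succ i ih => simp [frobeniusChain, derivative_pow, ih]

theorem natDegree_frobeniusChain (hp : 1 < p) {a : ℕ → k} (ha : a 0 ≠ 0) (i : ℕ) :
    (frobeniusChain p a (i + 1)).natDegree = p ^ (i + 1) := by
  induction i with
  | zero => simp [frobeniusChain, zero_pow (by omega : p ≠ 0), natDegree_C_mul_X_pow p _ ha]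
  | succ i ih =>
    have hlt : (C (a (i + 1)) * X ^ p).natDegree < (frobeniusChain p a (i + 1) ^ p).natDegree := by
      rw [natDegree_pow, ih]
      calc (C (a (i + 1)) * X ^ p).natDegree ≤ p := natDegree_C_mul_X_pow_le _ _
        _ < p * p ^ (i + 1) := lt_mul_right (by omega) (Nat.one_lt_pow (by omega) hp)
    rw [frobeniusChain, natDegree_add_eq_left_of_natDegree_lt hlt, natDegree_pow, ih]
    ring

end Polynomials

section PLinear

variable {k : Type*} [Field k] {p : ℕ} [Fact p.Prime] [CharP k p]
  {U : Type*} [AddCommGroup U] [Module k U]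

instance [PerfectRing k p] : RingHomSurjective (frobenius k p) := ⟨surjective_frobenius k p⟩

theorem exists_fixed_of_cyclic_relation [IsAlgClosed k] (f : U →ₛₗ[frobenius k p] U) (v : U)
    (n : ℕ) (a : ℕ → k) (ha : a 0 ≠ 0)
    (hli : LinearIndepOn k (fun i => f^[i] v) (range (n + 1)))
    (hrel : f^[n + 1] v = ∑ i ∈ range (n + 1), a i • f^[i] v) :
    ∃ u ≠ 0, f u = u := by
  have hp : 1 < p := (Fact.out : p.Prime).one_lt
  obtain ⟨t, ht0, ht⟩ := exists_ne_zero_eval_eq_self (derivative_frobeniusChain a (n + 1))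
    (by rw [natDegree_frobeniusChain hp ha]; exact Nat.one_lt_pow n.succ_ne_zero hp)
  set w : ℕ → U := fun i => f^[i] v
  set y : ℕ → k := fun i => (frobeniusChain p a i).eval t
  have hy : ∀ i, y (i + 1) = y i ^ p + t ^ p * a i := fun i => by
    simp only [y, frobeniusChain, eval_add, eval_pow, eval_mul, eval_C, eval_X]
    ring
  have hy0 : y 0 = 0 := by simp [y, frobeniusChain]
  have hw : ∀ i, f (w i) = w (i + 1) := fun i => (Function.iterate_succ_apply' f i v).symm
  refine ⟨∑ i ∈ range (n + 1), y (i + 1) • w i, fun h => ?_, ?_⟩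
  · exact ht0 (ht ▸ linearIndepOn_finset_iff.mp hli _ h n (by simp))
  calc f (∑ i ∈ range (n + 1), y (i + 1) • w i)
        = ∑ i ∈ range (n + 1), y (i + 1) ^ p • w (i + 1) := by
          simp [map_sum, hw, frobenius_def]
    _ = ∑ i ∈ range (n + 2), y i ^ p • w i := by
          rw [sum_range_succ' _ (n + 1), hy0, zero_pow (by omega), zero_smul, add_zero]
    _ = ∑ i ∈ range (n + 1), y i ^ p • w i + t ^ p • ∑ i ∈ range (n + 1), a i • w i := by
          rw [sum_range_succ, ← hrel, ← ht]
    _ = ∑ i ∈ range (n + 1), y (i + 1) • w i := by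
          rw [smul_sum, ← sum_add_distrib]
          refine sum_congr rfl fun i _ => ?_
          rw [smul_smul, ← add_smul, hy]

theorem exists_cyclic_relation [PerfectRing k p] [FiniteDimensional k U]
    (f : U →ₛₗ[frobenius k p] U) (hf : Function.Injective f) {v : U} (hv : v ≠ 0) :
    ∃ (n : ℕ) (a : ℕ → k), a 0 ≠ 0 ∧ LinearIndepOn k (fun i => f^[i] v) (range (n + 1)) ∧
      f^[n + 1] v = ∑ i ∈ range (n + 1), a i • f^[i] v := by
  classical
  set w : ℕ → U := fun i => f^[i] v
  have hex : ∃ m, w m ∈ Submodule.span k (w '' range m) := by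
    by_contra! h
    have hli : LinearIndependent k w := by
      rw [← linearIndepOn_univ_iff, ← Set.iUnion_Iio, ← Set.iUnion_congr fun m => coe_range m]
      exact linearIndepOn_iUnion_of_directed (Monotone.directed_le fun _ _ h => by simpa)
        fun m => linearIndepOn_range_of_notMem_span fun j _ => h j
    have := hli.finite_of_isNoetherian
    exact not_finite ℕ
  have hmin : ∀ j < Nat.find hex, w j ∉ Submodule.span k (w '' range j) :=
    fun j => Nat.find_min hex
  obtain ⟨n, hn⟩ : ∃ n, Nat.find hex = n + 1 :=
    Nat.exists_eq_add_one_of_ne_zero ((Nat.find_pos hex).mpr (by simp [w, hv])).ne'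
  rw [hn] at hmin
  obtain ⟨a, ha⟩ := (Submodule.mem_span_image_finset_iff_exists_fun' k).mp (hn ▸ Nat.find_spec hex)
  refine ⟨n, a, fun ha0 => hmin n n.lt_succ_self ?_,
    linearIndepOn_range_of_notMem_span hmin, ha.symm⟩
  set b : ℕ → k := fun i => (frobeniusEquiv k p).symm (a (i + 1))
  have hfw : f (w n) = f (∑ i ∈ range n, b i • w i) := by
    rw [map_sum]
    simp only [LinearMap.map_smulₛₗ, frobenius_apply_frobeniusEquiv_symm, b]
    rw [← Function.iterate_succ_apply' f n v]
    simpa [sum_range_succ' _ n, ha0, w, Function.iterate_succ_apply'] using ha.symm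
  rw [hf hfw]
  exact Submodule.sum_mem _ fun i hi => Submodule.smul_mem _ _
    (Submodule.subset_span ⟨i, by simpa using hi, rfl⟩)

theorem exists_fixed_ne_zero [IsAlgClosed k] [FiniteDimensional k U] [Nontrivial U]
    (f : U →ₛₗ[frobenius k p] U) (hf : Function.Injective f) : ∃ u ≠ 0, f u = u := by
  obtain ⟨v, hv⟩ := exists_ne (0 : U)
  obtain ⟨n, a, ha, hli, hrel⟩ := exists_cyclic_relation f hf hv
  exact exists_fixed_of_cyclic_relation f v n a ha hli hrel

theorem span_singleton_le_comap_of_apply_eq_self {f : U →ₛₗ[frobenius k p] U} {u : U}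
    (hu : f u = u) : k ∙ u ≤ (k ∙ u).comap f := by
  rw [Submodule.span_singleton_le_iff_mem, Submodule.mem_comap, hu]
  exact Submodule.mem_span_singleton_self u

theorem fixedMkQ_surjective [IsAlgClosed k] {f : U →ₛₗ[frobenius k p] U} {u : U}
    (hu : f u = u) :
    Function.Surjective (fixedMkQ f _ (span_singleton_le_comap_of_apply_eq_self hu)) := by
  rintro ⟨q, hq⟩
  obtain ⟨w, rfl⟩ := Submodule.Quotient.mk_surjective _ q
  have hw : f w - w ∈ k ∙ u := by
    rw [← Submodule.Quotient.eq]
    exact hq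
  obtain ⟨c, hc⟩ := Submodule.mem_span_singleton.mp hw
  obtain ⟨t, ht⟩ := exists_pow_sub_self_eq (Fact.out : p.Prime).one_lt (-c)
  have hfw : f w = w + c • u := by rw [hc]; abel
  refine ⟨⟨w + t • u, ?_⟩, Subtype.ext ?_⟩
  · rw [mem_fixedAddSubgroup, map_add, LinearMap.map_smulₛₗ, frobenius_def, hu, hfw, add_assoc,
      ← add_smul, show c + t ^ p = t by linear_combination ht]
  · rw [coe_fixedMkQ_apply, Submodule.Quotient.eq, add_sub_cancel_left]
    exact Submodule.smul_mem _ t (Submodule.mem_span_singleton_self u)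

theorem card_ker_fixedMkQ [IsAlgClosed k] {f : U →ₛₗ[frobenius k p] U} {u : U} (hu0 : u ≠ 0)
    (hu : f u = u) :
    Nat.card (fixedMkQ f _ (span_singleton_le_comap_of_apply_eq_self hu)).ker = p := by
  let e : {s : k // s ^ p = s} → (fixedMkQ f _ (span_singleton_le_comap_of_apply_eq_self hu)).ker :=
    fun s => ⟨⟨s.1 • u, by simp [hu, frobenius_def, s.2]⟩, (mem_ker_fixedMkQ _ _ _).mpr
      (Submodule.smul_mem _ _ (Submodule.mem_span_singleton_self u))⟩
  refine (Nat.card_congr (Equiv.ofBijective e ⟨fun s s' h => ?_, ?_⟩)).symm.trans card_pow_eq_self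
  · exact Subtype.ext (smul_left_injective k hu0 (Subtype.ext_iff.mp (Subtype.ext_iff.mp h)))
  · rintro ⟨⟨x, hx⟩, hxS⟩
    obtain ⟨s, rfl⟩ := Submodule.mem_span_singleton.mp ((mem_ker_fixedMkQ _ _ _).mp hxS)
    refine ⟨⟨s, smul_left_injective k hu0 ?_⟩, rfl⟩
    simpa [hu, frobenius_def] using hx

theorem card_fixedAddSubgroup_eq_mul [IsAlgClosed k] {f : U →ₛₗ[frobenius k p] U} {u : U}
    (hu0 : u ≠ 0) (hu : f u = u) :
    Nat.card (fixedAddSubgroup f) = p * Nat.card (fixedAddSubgroup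
      ((k ∙ u).mapQ (k ∙ u) f (span_singleton_le_comap_of_apply_eq_self hu))) := by
  rw [AddSubgroup.card_eq_card_quotient_mul_card_addSubgroup (fixedMkQ f (k ∙ u)
    (span_singleton_le_comap_of_apply_eq_self hu)).ker,
    card_ker_fixedMkQ hu0 hu, mul_comm, Nat.card_congr
      (QuotientAddGroup.quotientKerEquivOfSurjective _ (fixedMkQ_surjective hu)).toEquiv]

theorem card_fixedAddSubgroup_of_surjective [IsAlgClosed k] [FiniteDimensional k U]
    (f : U →ₛₗ[frobenius k p] U) (hf : Function.Surjective f) :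
    Nat.card (fixedAddSubgroup f) = p ^ Module.finrank k U := by
  induction hn : Module.finrank k U generalizing U with
  | zero =>
    have := Module.finrank_zero_iff.mp hn
    exact Nat.card_of_subsingleton (0 : fixedAddSubgroup f)
  | succ n ih =>
    have : Nontrivial U := Module.finrank_pos_iff (R := k).mp (by omega)
    obtain ⟨u, hu0, hu⟩ :=
      exists_fixed_ne_zero f (f.injective_of_surjective_of_finiteDimensional hf)
    have hq : Function.Surjective ((k ∙ u).mapQ (k ∙ u) f
        (span_singleton_le_comap_of_apply_eq_self hu)) := by
      rintro ⟨w⟩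
      obtain ⟨v, rfl⟩ := hf w
      exact ⟨Submodule.Quotient.mk v, rfl⟩
    have hrank : Module.finrank k (U ⧸ k ∙ u) = n := by
      have := Submodule.finrank_quotient_add_finrank (k ∙ u)
      rw [finrank_span_singleton hu0] at this
      omega
    rw [card_fixedAddSubgroup_eq_mul hu0 hu, ih _ hq hrank, pow_succ']

end PLinear

/-- for a `p`-linear map `F` on a finite dimensional vector space
`V` over an algebraically closed field of characteristic `p > 0`, the fixed
points `V^F` form an `𝔽_p`-vector space (in particular an additive subgroup,
which in characteristic `p` is the same thing), the stable image
`V^s = ∩_i im(F^i)` is a `k`-subspace, and `dim_k V^s = dim_{𝔽_p} V^F`,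
i.e. `|V^F| = p ^ dim_k V^s`. -/
theorem stmt9 {k : Type} [Field k] [IsAlgClosed k] {p : ℕ} [Fact p.Prime] [CharP k p]
    {V : Type} [AddCommGroup V] [Module k V] [FiniteDimensional k V]
    (F : V →+ V) (hF : ∀ (c : k) (v : V), F (c • v) = c ^ p • F v) :
    (∃ VF : AddSubgroup V, (VF : Set V) = {v : V | F v = v}) ∧
    (∃ W : Submodule k V, (W : Set V) = {v : V | ∀ i : ℕ, ∃ w : V, (⇑F)^[i] w = v} ∧
      Nat.card {v : V // F v = v} = p ^ Module.finrank k W) := by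
  let Fp : V →ₛₗ[frobenius k p] V := { F with map_smul' := hF }
  have hW := map_stableImage Fp
  let g := Fp.restrict (p := stableImage Fp) (q := stableImage Fp)
    fun _ hx => hW ▸ Submodule.mem_map_of_mem hx
  have hg : Function.Surjective g := by
    rintro ⟨w, hw⟩
    rw [← hW] at hw
    obtain ⟨v, hv, rfl⟩ := hw
    exact ⟨⟨v, hv⟩, rfl⟩
  refine ⟨⟨fixedAddSubgroup Fp, rfl⟩, stableImage Fp, Set.ext fun v => mem_stableImage Fp, ?_⟩
  rw [← card_fixedAddSubgroup_of_surjective g hg,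
    card_fixedAddSubgroup_restrict Fp _ fun v => mem_stableImage_of_apply_eq_self Fp]
  rfl
end

section
/- The functor V ↦ V^s := ∩_{i>0} im(F^i) is exact on the category of pairs (V, F), where V is a finite-dimensional vector space over an algebraically closed field k of characteristic p > 0 and F is a p-linear endomorphism, with morphisms the linear maps commuting with the given p-linear endomorphisms. -/
set_option linter.unusedSectionVars false

section Aux

variable {k : Type} [Field k] [IsAlgClosed k] {p : ℕ} [Fact p.Prime] [CharP k p]
variable {V : Type} [AddCommGroup V] [Module k V] [FiniteDimensional k V]

/-- The semisimple part as a set. -/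
def vsSet (F : V →+ V) : Set V := {v | ∀ i : ℕ, ∃ w, (⇑F)^[i] w = v}

variable (F : V →+ V) (hF : ∀ (c : k) (v : V), F (c • v) = c ^ p • F v)
include hF

lemma iter_smul (i : ℕ) (c : k) (v : V) :
    (⇑F)^[i] (c • v) = c ^ (p ^ i) • (⇑F)^[i] v := by
  induction i generalizing c v with
  | zero => simp
  | succ i ih =>
    rw [Function.iterate_succ_apply, Function.iterate_succ_apply, hF, ih,
      ← pow_mul, ← pow_succ']

/-- The image of the `i`-th iterate of `F` as a submodule. -/
noncomputable def wSub (i : ℕ) : Submodule k V where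
  carrier := Set.range (⇑F)^[i]
  add_mem' := by
    rintro a b ⟨x, rfl⟩ ⟨y, rfl⟩
    exact ⟨x + y, by
      induction i generalizing x y with
      | zero => simp
      | succ i ih => rw [Function.iterate_succ_apply, Function.iterate_succ_apply,
          Function.iterate_succ_apply, map_add, ih]⟩
  zero_mem' := ⟨0, by
    induction i with
    | zero => rfl
    | succ i ih => rw [Function.iterate_succ_apply, map_zero, ih]⟩
  smul_mem' := by
    rintro c a ⟨x, rfl⟩
    obtain ⟨d, hd⟩ := IsAlgClosed.exists_pow_nat_eq c (n := p ^ i)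
      (pow_pos (Nat.Prime.pos Fact.out) i)
    exact ⟨d • x, by rw [iter_smul F hF, hd]⟩

lemma wSub_antitone : ∀ ⦃i j : ℕ⦄, i ≤ j → wSub F hF j ≤ wSub F hF i := by
  have h : ∀ i, wSub F hF (i + 1) ≤ wSub F hF i := by
    rintro i a ⟨x, rfl⟩
    exact ⟨F x, (Function.iterate_succ_apply (⇑F) i x).symm⟩
  intro i j hij
  exact antitone_nat_of_succ_le h hij

lemma exists_stab : ∃ N : ℕ, ∀ i, N ≤ i → wSub F hF i = wSub F hF N := by
  obtain ⟨N, hN⟩ := Nat.sInf_mem (s := Set.range fun i =>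
    Module.finrank k (wSub F hF i)) ⟨_, ⟨0, rfl⟩⟩
  refine ⟨N, fun i hi => Submodule.eq_of_le_of_finrank_le (wSub_antitone F hF hi) ?_⟩
  exact le_of_eq_of_le hN (Nat.sInf_le ⟨i, rfl⟩)

lemma vsSet_eq_wSub {N : ℕ} (hN : ∀ i, N ≤ i → wSub F hF i = wSub F hF N) :
    vsSet F = (wSub F hF N : Set V) := by
  ext v
  constructor
  · intro hv
    exact hv N
  · intro hv i
    rcases le_total i N with h | h
    · exact wSub_antitone F hF h hv
    · rw [← hN i h] at hv; exact hv

omit hF in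
lemma mapsTo_vsSet : Set.MapsTo F (vsSet F) (vsSet F) := by
  intro v hv i
  obtain ⟨w, hw⟩ := hv i
  exact ⟨F w, by rw [← Function.iterate_succ_apply, Function.iterate_succ_apply', hw]⟩

omit hF in
lemma iter_zero (i : ℕ) : (⇑F)^[i] (0 : V) = 0 := by
  induction i with
  | zero => rfl
  | succ i ih => rw [Function.iterate_succ_apply, map_zero, ih]

omit hF in
lemma zero_mem_vsSet : (0 : V) ∈ vsSet F := fun i => ⟨0, iter_zero F i⟩

lemma surjOn_vsSet : ∀ v ∈ vsSet F, ∃ w ∈ vsSet F, F w = v := by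
  obtain ⟨N, hN⟩ := exists_stab F hF
  intro v hv
  have hv' : v ∈ wSub F hF (N + 1) := by
    rw [hN (N + 1) (Nat.le_succ N)]
    rw [vsSet_eq_wSub F hF hN] at hv
    exact hv
  obtain ⟨u, hu⟩ := hv'
  refine ⟨(⇑F)^[N] u, ?_, ?_⟩
  · rw [vsSet_eq_wSub F hF hN]; exact ⟨u, rfl⟩
  · rw [Function.iterate_succ_apply'] at hu; exact hu

lemma iter_surjOn_vsSet : ∀ (i : ℕ), ∀ v ∈ vsSet F, ∃ w ∈ vsSet F, (⇑F)^[i] w = v := by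
  intro i
  induction i with
  | zero => exact fun v hv => ⟨v, hv, rfl⟩
  | succ i ih =>
    intro v hv
    obtain ⟨y, hy, hyv⟩ := ih v hv
    obtain ⟨z, hz, hzy⟩ := surjOn_vsSet F hF y hy
    exact ⟨z, hz, by rw [Function.iterate_succ_apply, hzy, hyv]⟩

/-- `F` is injective on the semisimple part. -/
lemma injOn_vsSet : Set.InjOn F (vsSet F) := by
  obtain ⟨N, hN⟩ := exists_stab F hF
  set W : Submodule k V := wSub F hF N with hW
  have hVs : vsSet F = (W : Set V) := vsSet_eq_wSub F hF hN
  -- F maps W into W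
  have hmaps : ∀ v ∈ W, F v ∈ W := by
    intro v hv
    have : F v ∈ vsSet F := mapsTo_vsSet F (by rw [hVs]; exact hv)
    rw [hVs] at this; exact this
  -- F is surjective W → W
  have hsurj : ∀ v ∈ W, ∃ w ∈ W, F w = v := by
    intro v hv
    obtain ⟨w, hw, hwv⟩ := surjOn_vsSet F hF v (by rw [hVs]; exact hv)
    rw [hVs] at hw
    exact ⟨w, hw, hwv⟩
  -- the inverse frobenius
  let σ := (frobeniusEquiv k p).symm
  have hσ : ∀ c : k, (σ c) ^ p = c := fun c =>
    (frobeniusEquiv k p).apply_symm_apply c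
  -- a basis of W
  let b := Module.finBasis k W
  -- the twist map τ : W → W, semilinear over σ, bijective
  let τ : W → W := fun v => b.equivFun.symm (fun j => σ (b.equivFun v j))
  have hτ_surj : Function.Surjective τ := by
    intro w
    refine ⟨b.equivFun.symm (fun j => (frobeniusEquiv k p) (b.equivFun w j)), ?_⟩
    show b.equivFun.symm _ = w
    rw [LinearEquiv.apply_symm_apply]
    conv_rhs => rw [← b.equivFun.symm_apply_apply w]
    congr 1
    funext j
    exact (frobeniusEquiv k p).symm_apply_apply _
  have hτ_add : ∀ x y, τ (x + y) = τ x + τ y := by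
    intro x y
    show b.equivFun.symm _ = b.equivFun.symm _ + b.equivFun.symm _
    rw [← map_add]
    congr 1
    funext j
    simp
  have hτ_smul : ∀ (c : k) x, τ (c • x) = σ c • τ x := by
    intro c x
    show b.equivFun.symm _ = σ c • b.equivFun.symm _
    rw [← map_smul]
    congr 1
    funext j
    rw [map_smul, Pi.smul_apply, smul_eq_mul, map_mul, Pi.smul_apply, smul_eq_mul]
  -- F as a map W → W
  let FW : W → W := fun v => ⟨F v, hmaps v v.2⟩
  -- the linear endomorphism G = FW ∘ τ
  let G : W →ₗ[k] W :=
    { toFun := fun v => FW (τ v)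
      map_add' := by
        intro x y
        simp only [hτ_add]
        exact Subtype.ext (by simpa [FW] using map_add F _ _)
      map_smul' := by
        intro c x
        simp only [hτ_smul]
        refine Subtype.ext ?_
        show F ((σ c • τ x : W) : V) = c • (F ((τ x : W) : V))
        rw [Submodule.coe_smul, hF, hσ] }
  have hG_surj : Function.Surjective G := by
    intro w
    obtain ⟨u, hu, huw⟩ := hsurj w w.2
    obtain ⟨x, hx⟩ := hτ_surj ⟨u, hu⟩
    exact ⟨x, Subtype.ext (by simp [G, FW, hx, huw])⟩
  have hG_inj : Function.Injective G :=
    LinearMap.injective_iff_surjective.2 hG_surj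
  -- conclude
  intro a ha b' hb' hab
  rw [hVs] at ha hb'
  obtain ⟨x, hx⟩ := hτ_surj ⟨a, ha⟩
  obtain ⟨y, hy⟩ := hτ_surj ⟨b', hb'⟩
  have : G x = G y := Subtype.ext (by simp [G, FW, hx, hy, hab])
  have hxy : x = y := hG_inj this
  have := hx.symm.trans (by rw [hxy, hy])
  exact congrArg Subtype.val this

omit hF in
lemma iter_mem_vsSet : ∀ (i : ℕ), ∀ v ∈ vsSet F, (⇑F)^[i] v ∈ vsSet F := by
  intro i
  induction i with
  | zero => exact fun v hv => hv
  | succ i ih =>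
    intro v hv
    rw [Function.iterate_succ_apply']
    exact mapsTo_vsSet F (ih v hv)

/-- Only `0` in the semisimple part is killed by an iterate of `F`. -/
lemma iter_eq_zero_vsSet : ∀ (i : ℕ), ∀ v ∈ vsSet F, (⇑F)^[i] v = 0 → v = 0 := by
  intro i
  induction i with
  | zero => intro v _ h; exact h
  | succ i ih =>
    intro v hv h
    rw [Function.iterate_succ_apply'] at h
    have h0 : F ((⇑F)^[i] v) = F 0 := by rw [h, map_zero]
    have := injOn_vsSet F hF (iter_mem_vsSet F i v hv) (zero_mem_vsSet F) h0
    exact ih v hv this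

end Aux

/-- the functor `(V, F) ↦ V^s := ∩_{i} im(F^i)` is exact on the
category of finite dimensional vector spaces over an algebraically closed field
`k` of characteristic `p > 0` equipped with a `p`-linear endomorphism, with
morphisms the linear maps commuting with the `p`-linear endomorphisms:
a short exact sequence `0 → V → V' → V'' → 0` induces a short exact sequence
`0 → V^s → V'^s → V''^s → 0` of the semisimple parts. -/
theorem stmt10 {k : Type} [Field k] [IsAlgClosed k] {p : ℕ} [Fact p.Prime] [CharP k p]
    {V V' V'' : Type} [AddCommGroup V] [Module k V] [FiniteDimensional k V]
    [AddCommGroup V'] [Module k V'] [FiniteDimensional k V']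
    [AddCommGroup V''] [Module k V''] [FiniteDimensional k V'']
    (F : V →+ V) (hF : ∀ (c : k) (v : V), F (c • v) = c ^ p • F v)
    (F' : V' →+ V') (hF' : ∀ (c : k) (v : V'), F' (c • v) = c ^ p • F' v)
    (F'' : V'' →+ V'') (hF'' : ∀ (c : k) (v : V''), F'' (c • v) = c ^ p • F'' v)
    (f : V →ₗ[k] V') (g : V' →ₗ[k] V'')
    (hfF : ∀ v, f (F v) = F' (f v)) (hgF : ∀ v, g (F' v) = F'' (g v))
    (hf : Function.Injective f) (hg : Function.Surjective g)
    (hexact : LinearMap.range f = LinearMap.ker g) :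
    -- notation for the semisimple parts
    (∀ (Vs : Set V) (Vs' : Set V') (Vs'' : Set V''),
      Vs = {v | ∀ i : ℕ, ∃ w, (⇑F)^[i] w = v} →
      Vs' = {v | ∀ i : ℕ, ∃ w, (⇑F')^[i] w = v} →
      Vs'' = {v | ∀ i : ℕ, ∃ w, (⇑F'')^[i] w = v} →
      -- the induced sequence `0 → V^s → V'^s → V''^s → 0` is exact:
      Set.MapsTo f Vs Vs' ∧ Set.InjOn f Vs ∧
      g '' Vs' = Vs'' ∧
      f '' Vs = {v ∈ Vs' | g v = 0}) := by
  intro Vs Vs' Vs'' hVs hVs' hVs''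
  have hVsE : Vs = vsSet F := hVs
  have hVsE' : Vs' = vsSet F' := hVs'
  have hVsE'' : Vs'' = vsSet F'' := hVs''
  have hfFi : ∀ (i : ℕ) (v : V), f ((⇑F)^[i] v) = (⇑F')^[i] (f v) := by
    intro i
    induction i with
    | zero => intro v; rfl
    | succ i ih =>
      intro v
      rw [Function.iterate_succ_apply', Function.iterate_succ_apply', hfF, ih]
  have hgFi : ∀ (i : ℕ) (v : V'), g ((⇑F')^[i] v) = (⇑F'')^[i] (g v) := by
    intro i
    induction i with
    | zero => intro v; rfl
    | succ i ih =>
      intro v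
      rw [Function.iterate_succ_apply', Function.iterate_succ_apply', hgF, ih]
  have hmapsg : ∀ v' ∈ vsSet F', g v' ∈ vsSet F'' := by
    intro v' hv' i
    obtain ⟨w, hw⟩ := hv' i
    exact ⟨g w, by rw [← hgFi, hw]⟩
  have h1 : Set.MapsTo f Vs Vs' := by
    rw [hVsE, hVsE']
    intro v hv i
    obtain ⟨w, hw⟩ := hv i
    exact ⟨f w, by rw [← hfFi, hw]⟩
  obtain ⟨N', hN'⟩ := exists_stab F' hF'
  have h3 : g '' Vs' = Vs'' := by
    rw [hVsE', hVsE'']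
    apply Set.Subset.antisymm
    · rintro _ ⟨v', hv', rfl⟩
      exact hmapsg v' hv'
    · intro v'' hv''
      obtain ⟨w'', hw''⟩ := hv'' N'
      obtain ⟨u, hu⟩ := hg w''
      refine ⟨(⇑F')^[N'] u, ?_, ?_⟩
      · rw [vsSet_eq_wSub F' hF' hN']
        exact ⟨u, rfl⟩
      · rw [hgFi, hu]
        exact hw''
  have h4 : f '' Vs = {v ∈ Vs' | g v = 0} := by
    rw [hVsE, hVsE']
    apply Set.Subset.antisymm
    · rintro _ ⟨v, hv, rfl⟩
      refine ⟨?_, ?_⟩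
      · intro i
        obtain ⟨w, hw⟩ := hv i
        exact ⟨f w, by rw [← hfFi, hw]⟩
      · have hmem : f v ∈ LinearMap.range f := ⟨v, rfl⟩
        rw [hexact] at hmem
        exact hmem
    · rintro v' ⟨hv', hgv'⟩
      have hker : v' ∈ LinearMap.ker g := hgv'
      rw [← hexact] at hker
      obtain ⟨v, rfl⟩ := hker
      refine ⟨v, ?_, rfl⟩
      intro i
      obtain ⟨y, hy, hyv⟩ := iter_surjOn_vsSet F' hF' i (f v) hv'
      have hgy0 : g y = 0 := by
        apply iter_eq_zero_vsSet F'' hF'' i (g y) (hmapsg y hy)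
        rw [← hgFi, hyv]
        exact hgv'
      have hkery : y ∈ LinearMap.ker g := hgy0
      rw [← hexact] at hkery
      obtain ⟨x, rfl⟩ := hkery
      refine ⟨x, hf ?_⟩
      rw [hfFi, hyv]
  exact ⟨h1, hf.injOn, h3, h4⟩
end
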